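/- Let p > 1 and f(η) = (p - 1 + ((p-1)^2/(4p)) η^2)^(-1/(p-1)). Then f satisfies the profile equation: -(1/2) η f'(η) - (1/(p-1)) f(η) + f(η)^p = 0 for all η ∈ ℝ. -/
import Mathlib


open Real

theorem stmt_1 (p : ℝ) (hp : 1 < p)
    (f : ℝ → ℝ)
    (hf : ∀ η : ℝ, f η = (p - 1 + ((p - 1) ^ 2 / (4 * p)) * η ^ 2) ^ (-(1 / (p - 1)))) :
    ∀ η : ℝ, -(1 / 2) * η * deriv f η - (1 / (p - 1)) * f η + f η ^ p = 0 := by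
  intro η
  have hp1 : (0:ℝ) < p - 1 := by linarith
  have hp0 : (0:ℝ) < p := by linarith
  have hgpos : (0:ℝ) < p - 1 + ((p - 1) ^ 2 / (4 * p)) * η ^ 2 := by positivity
  set g : ℝ := p - 1 + ((p - 1) ^ 2 / (4 * p)) * η ^ 2 with hg
  have hgη : HasDerivAt (fun x : ℝ => p - 1 + ((p - 1) ^ 2 / (4 * p)) * x ^ 2)
      ((p - 1) ^ 2 / (4 * p) * (2 * η)) η := by
    have h1 : HasDerivAt (fun x : ℝ => x ^ 2) (2 * η) η := by
      simpa using hasDerivAt_pow 2 η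
    simpa using (h1.const_mul ((p - 1) ^ 2 / (4 * p))).const_add (p - 1)
  have hfd := hgη.rpow_const (p := -(1 / (p - 1))) (Or.inl (ne_of_gt hgpos))
  have hderiv : deriv f η =
      (p - 1) ^ 2 / (4 * p) * (2 * η) * (-(1 / (p - 1))) * g ^ (-(1 / (p - 1)) - 1) := by
    have hfe : f = fun x => (p - 1 + ((p - 1) ^ 2 / (4 * p)) * x ^ 2) ^ (-(1 / (p - 1))) :=
      funext hf
    rw [hfe, hfd.deriv]
  set A : ℝ := g ^ (-(1 / (p - 1)) - 1) with hA
  have h1 : g ^ (-(1 / (p - 1))) = A * g := by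
    rw [hA, ← Real.rpow_add_one (ne_of_gt hgpos)]
    congr 1
    ring
  have h2 : (g ^ (-(1 / (p - 1)))) ^ p = A := by
    rw [← Real.rpow_mul hgpos.le, hA]
    congr 1
    field_simp
    ring
  rw [hf η, hderiv, ← hg, h2, h1, hg]
  field_simp
  ring
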